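/- arXiv:2302.10805 — 6 statements merged into one kernel-verified Lean document; each statement's English description precedes it below -/
import Mathlib

section
/- Let (S,B) be a random pair on [0,1]^2 whose joint distribution is σ-smooth (i.e., assigns each measurable set A ⊆ [0,1]^2 probability at most Leb(A)/σ). Define GFT(p) = (B - S)·1{S ≤ p ≤ B}. Then for all x, y ∈ [0,1], |E[GFT(y)] - E[GFT(x)]| ≤ |y - x|/σ. -/
/-!
Assume `x ≤ y`. The trade decisions at `x` and at `y` differ only when the seller's value lies
in `(x, y]` and the buyer's is at least `y`, or the buyer's value lies in `[x, y)` and the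
seller's is at most `x`. Inside the unit square these two rectangles have total area
`(y - x) * (1 - (y - x)) ≤ y - x`, and the gains differ there by at most `1`. By smoothness the
two expectations therefore differ by at most `(y - x) / σ`.
-/

open MeasureTheory Set

noncomputable def gainFromTrade (p : ℝ) (z : ℝ × ℝ) : ℝ :=
  (z.2 - z.1) * if z.1 ≤ p ∧ p ≤ z.2 then 1 else 0

lemma measurable_gainFromTrade (p : ℝ) : Measurable (gainFromTrade p) :=
  (measurable_snd.sub measurable_fst).mul <| Measurable.ite
    ((measurableSet_le measurable_fst measurable_const).inter
      (measurableSet_le measurable_const measurable_snd)) measurable_const measurable_const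

lemma gainFromTrade_nonneg (p : ℝ) (z : ℝ × ℝ) : 0 ≤ gainFromTrade p z := by
  unfold gainFromTrade
  split_ifs with h
  · linarith [h.1, h.2]
  · simp

lemma gainFromTrade_le_one {p : ℝ} {z : ℝ × ℝ} (h₁ : 0 ≤ z.1) (h₂ : z.2 ≤ 1) :
    gainFromTrade p z ≤ 1 := by
  unfold gainFromTrade
  split_ifs <;> linarith

lemma integrable_gainFromTrade {μ : Measure (ℝ × ℝ)} [IsFiniteMeasure μ]
    (hμ : ∀ᵐ z ∂μ, z ∈ Icc (0:ℝ) 1 ×ˢ Icc (0:ℝ) 1) (p : ℝ) :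
    Integrable (gainFromTrade p) μ := by
  refine .of_bound (measurable_gainFromTrade p).aestronglyMeasurable 1 ?_
  filter_upwards [hμ] with z ⟨⟨h₁, _⟩, _, h₂⟩
  rw [Real.norm_of_nonneg (gainFromTrade_nonneg p z)]
  exact gainFromTrade_le_one h₁ h₂

def tradeSwitchRegion (x y : ℝ) : Set (ℝ × ℝ) :=
  Ioc x y ×ˢ Icc y 1 ∪ Icc 0 x ×ˢ Ico x y

lemma measurableSet_tradeSwitchRegion (x y : ℝ) : MeasurableSet (tradeSwitchRegion x y) :=
  (measurableSet_Ioc.prod measurableSet_Icc).union (measurableSet_Icc.prod measurableSet_Ico)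

lemma volume_tradeSwitchRegion_le {x y : ℝ} (hx : 0 ≤ x) (hxy : x ≤ y) (hy : y ≤ 1) :
    volume (tradeSwitchRegion x y) ≤ ENNReal.ofReal (y - x) :=
  calc volume (tradeSwitchRegion x y)
      ≤ volume (Ioc x y ×ˢ Icc y 1) + volume (Icc 0 x ×ˢ Ico x y) := measure_union_le _ _
    _ = ENNReal.ofReal (y - x) * ENNReal.ofReal (1 - y)
          + ENNReal.ofReal x * ENNReal.ofReal (y - x) := by
      rw [Measure.volume_eq_prod, Measure.prod_prod, Measure.prod_prod, Real.volume_Ioc,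
        Real.volume_Icc, Real.volume_Icc, Real.volume_Ico, sub_zero]
    _ = ENNReal.ofReal ((y - x) * (1 - y) + x * (y - x)) := by
      rw [← ENNReal.ofReal_mul (by linarith), ← ENNReal.ofReal_mul hx,
        ENNReal.ofReal_add (by nlinarith) (by nlinarith)]
    _ ≤ ENNReal.ofReal (y - x) := ENNReal.ofReal_le_ofReal (by nlinarith)

lemma abs_gainFromTrade_sub_le_indicator {x y : ℝ} (hxy : x ≤ y) {z : ℝ × ℝ}
    (hz : z ∈ Icc (0:ℝ) 1 ×ˢ Icc (0:ℝ) 1) :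
    |gainFromTrade y z - gainFromTrade x z| ≤ (tradeSwitchRegion x y).indicator 1 z := by
  obtain ⟨⟨h₁, -⟩, -, h₂⟩ := hz
  have hgap : |gainFromTrade y z - gainFromTrade x z| ≤ 1 :=
    abs_sub_le_of_nonneg_of_le (gainFromTrade_nonneg y z) (gainFromTrade_le_one h₁ h₂)
      (gainFromTrade_nonneg x z) (gainFromTrade_le_one h₁ h₂)
  by_cases hswitch : z ∈ tradeSwitchRegion x y
  · simpa [hswitch] using hgap
  · have hsame : (z.1 ≤ y ∧ y ≤ z.2) ↔ (z.1 ≤ x ∧ x ≤ z.2) := by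
      simp only [tradeSwitchRegion, mem_union, mem_prod, mem_Ioc, mem_Icc, mem_Ico] at hswitch
      constructor <;> intro h <;> by_contra h' <;> apply hswitch
      · exact .inl ⟨⟨lt_of_not_ge fun h'' => h' ⟨h'', hxy.trans h.2⟩, h.1⟩, h.2, h₂⟩
      · exact .inr ⟨⟨h₁, h.1⟩, h.2, lt_of_not_ge fun h'' => h' ⟨h.1.trans hxy, h''⟩⟩
    simp [gainFromTrade, hsame, hswitch]

lemma abs_integral_sub_le_measureReal {α : Type*} [MeasurableSpace α] {μ : Measure α}
    [IsFiniteMeasure μ]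
    {f g : α → ℝ} (hf : Integrable f μ) (hg : Integrable g μ) {s : Set α} (hs : MeasurableSet s)
    (hfg : ∀ᵐ a ∂μ, |f a - g a| ≤ s.indicator 1 a) :
    |∫ a, f a ∂μ - ∫ a, g a ∂μ| ≤ μ.real s :=
  calc |∫ a, f a ∂μ - ∫ a, g a ∂μ| = ‖∫ a, (f a - g a) ∂μ‖ := by rw [integral_sub hf hg]; rfl
    _ ≤ ∫ a, |f a - g a| ∂μ := norm_integral_le_integral_norm _
    _ ≤ ∫ a, s.indicator 1 a ∂μ :=
      integral_mono_ae (hf.sub hg).abs ((integrable_const 1).indicator hs) hfg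
    _ = μ.real s := integral_indicator_one hs

lemma measureReal_le_of_smooth {α : Type*} [MeasurableSpace α] {μ ν : Measure α} {σ c : ℝ}
    (hσ : 0 < σ) (hc : 0 ≤ c) {s : Set α} (hμs : μ s ≤ ν s / ENNReal.ofReal σ)
    (hνs : ν s ≤ ENNReal.ofReal c) :
    μ.real s ≤ c / σ := by
  refine ENNReal.toReal_le_of_le_ofReal (div_nonneg hc hσ.le) ?_
  rw [ENNReal.ofReal_div_of_pos hσ]
  exact hμs.trans (ENNReal.div_le_div_right hνs _)

lemma abs_integral_gainFromTrade_sub_le (σ : ℝ) (hσ : 0 < σ)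
    (μ : Measure (ℝ × ℝ)) [IsProbabilityMeasure μ]
    (hsupp : μ (Icc (0:ℝ) 1 ×ˢ Icc (0:ℝ) 1) = 1)
    (hsmooth : ∀ A : Set (ℝ × ℝ), MeasurableSet A → μ A ≤ volume A / ENNReal.ofReal σ)
    {x y : ℝ} (hx : 0 ≤ x) (hxy : x ≤ y) (hy : y ≤ 1) :
    |∫ z, gainFromTrade y z ∂μ - ∫ z, gainFromTrade x z ∂μ| ≤ (y - x) / σ := by
  have hsquare : ∀ᵐ z ∂μ, z ∈ Icc (0:ℝ) 1 ×ˢ Icc (0:ℝ) 1 :=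
    (ae_mem_iff_measure_eq (measurableSet_Icc.prod measurableSet_Icc).nullMeasurableSet).2
      (by rw [hsupp, measure_univ])
  have hmeas := measurableSet_tradeSwitchRegion x y
  calc _ ≤ μ.real (tradeSwitchRegion x y) :=
        abs_integral_sub_le_measureReal (integrable_gainFromTrade hsquare y)
          (integrable_gainFromTrade hsquare x) hmeas
          (hsquare.mono fun z hz => abs_gainFromTrade_sub_le_indicator hxy hz)
    _ ≤ (y - x) / σ := measureReal_le_of_smooth hσ (sub_nonneg.2 hxy) (hsmooth _ hmeas)
          (volume_tradeSwitchRegion_le hx hxy hy)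

theorem lipschitz_expected_gft_general
    (σ : ℝ) (hσ : 0 < σ)
    (μ : Measure (ℝ × ℝ)) [IsProbabilityMeasure μ]
    (hsupp : μ (Set.Icc (0:ℝ) 1 ×ˢ Set.Icc (0:ℝ) 1) = 1)
    (hsmooth : ∀ A : Set (ℝ × ℝ), MeasurableSet A →
      μ A ≤ volume A / ENNReal.ofReal σ)
    (x y : ℝ) (hx : x ∈ Set.Icc (0:ℝ) 1) (hy : y ∈ Set.Icc (0:ℝ) 1) :
    |(∫ z : ℝ × ℝ, (z.2 - z.1) * (if z.1 ≤ y ∧ y ≤ z.2 then (1:ℝ) else 0) ∂μ) -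
      ∫ z : ℝ × ℝ, (z.2 - z.1) * (if z.1 ≤ x ∧ x ≤ z.2 then (1:ℝ) else 0) ∂μ|
    ≤ |y - x| / σ := by
  change |∫ z, gainFromTrade y z ∂μ - ∫ z, gainFromTrade x z ∂μ| ≤ |y - x| / σ
  rcases le_total x y with hxy | hyx
  · rw [abs_of_nonneg (sub_nonneg.2 hxy)]
    exact abs_integral_gainFromTrade_sub_le σ hσ μ hsupp hsmooth hx.1 hxy hy.2
  · rw [abs_sub_comm, abs_sub_comm y x, abs_of_nonneg (sub_nonneg.2 hyx)]
    exact abs_integral_gainFromTrade_sub_le σ hσ μ hsupp hsmooth hy.1 hyx hx.2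

/-- Lipschitzness of the expected gain from trade under a σ-smooth distribution
on [0,1]². -/
theorem lipschitz_expected_gft
    (σ : ℝ) (hσ : 0 < σ) (hσ1 : σ ≤ 1)
    (μ : Measure (ℝ × ℝ)) [IsProbabilityMeasure μ]
    (hsupp : μ (Set.Icc (0:ℝ) 1 ×ˢ Set.Icc (0:ℝ) 1) = 1)
    (hsmooth : ∀ A : Set (ℝ × ℝ), MeasurableSet A →
      μ A ≤ volume A / ENNReal.ofReal σ)
    (x y : ℝ) (hx : x ∈ Set.Icc (0:ℝ) 1) (hy : y ∈ Set.Icc (0:ℝ) 1) :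
    |(∫ z : ℝ × ℝ, (z.2 - z.1) * (if z.1 ≤ y ∧ y ≤ z.2 then (1:ℝ) else 0) ∂μ) -
      ∫ z : ℝ × ℝ, (z.2 - z.1) * (if z.1 ≤ x ∧ x ≤ z.2 then (1:ℝ) else 0) ∂μ|
    ≤ |y - x| / σ :=
  lipschitz_expected_gft_general σ hσ μ hsupp hsmooth x y hx hy
end

section
/- Fix p ∈ [0,1] and valuations (s,b) ∈ [0,1]^2. Let C be a Bernoulli(p) random variable, U uniform on [0,p], V uniform on [p,1], all independent. Define (P̂,Q̂) = (U, p) if C = 1 and (P̂,Q̂) = (p, V) if C = 0. Then E[1{s ≤ P̂ ≤ Q̂ ≤ b}] = (b − s)·1{s ≤ p ≤ b}, i.e., the one-bit trade indicator at the randomized price pair is an unbiased estimator of the gain from trade at price p. -/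
open MeasureTheory Set

/-! On heads the trade happens iff `U ∈ [s, p]`, which has probability `(p - s) / p`; on tails iff
`V ∈ [p, b]`, with probability `(b - p) / (1 - p)`. Weighted by `p` and `1 - p` the two terms sum to
`(p - s) + (b - p) = b - s`. If `s ≤ p ≤ b` fails, neither event can occur. -/

theorem sub_mul_measureReal_Icc_of_uniform {a c x y : ℝ} {μ : Measure ℝ}
    (hμ : a < c → μ = (ENNReal.ofReal (c - a))⁻¹ • volume.restrict (Icc a c))
    (hax : a ≤ x) (hxy : x ≤ y) (hyc : y ≤ c) :
    (c - a) * μ.real (Icc x y) = y - x := by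
  -- for `a = c` both sides vanish whatever `μ` is, which covers the Dirac cases
  rcases (hax.trans (hxy.trans hyc)).lt_or_eq with hac | rfl
  · have hca : 0 < c - a := sub_pos.mpr hac
    rw [hμ hac, measureReal_ennreal_smul_apply, measureReal_restrict_apply measurableSet_Icc,
      Icc_inter_Icc, max_eq_left hax, min_eq_left hyc, Real.volume_real_Icc_of_le hxy,
      ENNReal.toReal_inv, ENNReal.toReal_ofReal hca.le]
    field_simp
  · linarith [le_antisymm hxy (hyc.trans hax)]

theorem integral_ite_le_and_le (μ : Measure ℝ) (x y : ℝ) :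
    ∫ u, (if x ≤ u ∧ u ≤ y then (1:ℝ) else 0) ∂μ = μ.real (Icc x y) := by
  rw [← integral_indicator_one measurableSet_Icc]
  simp only [indicator_apply, mem_Icc, Pi.one_apply]

theorem one_bit_estimator_unbiased_general
    (p s b : ℝ)
    (hs : s ∈ Set.Icc (0:ℝ) 1) (hb : b ∈ Set.Icc (0:ℝ) 1)
    (μU μV : Measure ℝ)
    (hU : μU = if p = 0 then Measure.dirac 0
      else (ENNReal.ofReal p)⁻¹ • volume.restrict (Set.Icc 0 p))
    (hV : μV = if p = 1 then Measure.dirac 1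
      else (ENNReal.ofReal (1 - p))⁻¹ • volume.restrict (Set.Icc p 1)) :
    p * (∫ u, (if s ≤ u ∧ u ≤ p ∧ p ≤ b then (1:ℝ) else 0) ∂μU)
      + (1 - p) * (∫ v, (if s ≤ p ∧ p ≤ v ∧ v ≤ b then (1:ℝ) else 0) ∂μV)
    = (b - s) * (if s ≤ p ∧ p ≤ b then (1:ℝ) else 0) := by
  by_cases htrade : s ≤ p ∧ p ≤ b
  · obtain ⟨hsp, hpb⟩ := htrade
    have hUmass : (p - 0) * μU.real (Icc s p) = p - s :=
      sub_mul_measureReal_Icc_of_uniform (fun h => by rw [hU, if_neg h.ne', sub_zero])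
        hs.1 hsp le_rfl
    have hVmass : (1 - p) * μV.real (Icc p b) = b - p :=
      sub_mul_measureReal_Icc_of_uniform (fun h => by rw [hV, if_neg h.ne]) le_rfl hpb hb.2
    simp only [hsp, hpb, and_true, true_and, if_true, integral_ite_le_and_le]
    linarith
  · have hU0 : ∀ u, ¬(s ≤ u ∧ u ≤ p ∧ p ≤ b) := fun u h => htrade ⟨h.1.trans h.2.1, h.2.2⟩
    have hV0 : ∀ v, ¬(s ≤ p ∧ p ≤ v ∧ v ≤ b) := fun v h => htrade ⟨h.1, h.2.1.trans h.2.2⟩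
    simp [hU0, hV0, htrade]

/-- Unbiasedness of the one-bit estimator of the gain from trade:
tossing a coin with bias p, posting (U,p) with U uniform on [0,p] on heads and
(p,V) with V uniform on [p,1] on tails, the expected trade indicator equals
(b − s)·1{s ≤ p ≤ b}. -/
theorem one_bit_estimator_unbiased
    (p s b : ℝ) (hp : p ∈ Set.Icc (0:ℝ) 1)
    (hs : s ∈ Set.Icc (0:ℝ) 1) (hb : b ∈ Set.Icc (0:ℝ) 1)
    (μU μV : Measure ℝ)
    (hU : μU = if p = 0 then Measure.dirac 0
      else (ENNReal.ofReal p)⁻¹ • volume.restrict (Set.Icc 0 p))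
    (hV : μV = if p = 1 then Measure.dirac 1
      else (ENNReal.ofReal (1 - p))⁻¹ • volume.restrict (Set.Icc p 1)) :
    p * (∫ u, (if s ≤ u ∧ u ≤ p ∧ p ≤ b then (1:ℝ) else 0) ∂μU)
      + (1 - p) * (∫ v, (if s ≤ p ∧ p ≤ v ∧ v ≤ b then (1:ℝ) else 0) ∂μV)
    = (b - s) * (if s ≤ p ∧ p ≤ b then (1:ℝ) else 0) :=
  one_bit_estimator_unbiased_general p s b hs hb μU μV hU hV
end

section
/- Let (Y,d) be a separable complete metric space with Borel σ-algebra F_Y. Let (Ω,F) be a measurable space, X : Ω → {0,1}, Y' : Ω → Y, U : Ω → [0,1] random variables, and P, Q probability measures on F with P[X=1] = p ∈ (0,1), Q[X=1] = q ∈ [0,1], U uniform under both P and Q, and U independent of X under both P and Q. If Q_{Y'} ≪ P_{Y'} and P_{Y'}-almost surely min(q/p, (1−q)/(1−p)) ≤ dQ_{Y'}/dP_{Y'} ≤ max(q/p, (1−q)/(1−p)), then there exists a measurable φ : {0,1}×[0,1] → Y such that P_{Y'} = P_{φ(X,U)} and Q_{Y'} = Q_{φ(X,U)}. -/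
open MeasureTheory ProbabilityTheory Set ENNReal

/-!
Write `μ = P_{Y'}`, `ν = Q_{Y'}` and `t = dν/dμ`. The bound on `t` says exactly that
`w₁ = ((1 - q) - (1 - p) t) / (p - q)` and `w₀ = (p t - q) / (p - q)` are nonnegative; they solve
`p w₁ + (1 - p) w₀ = 1` and `q w₁ + (1 - q) w₀ = t`, so `μ₁ = w₁ μ` and `μ₀ = w₀ μ` are probability
measures with `μ = p μ₁ + (1 - p) μ₀` and `ν = q μ₁ + (1 - q) μ₀` (for `p = q` the bound forces
`ν = μ`, and `μ₁ = μ₀ = μ`). Each `μ_b` is the image of the uniform law under some measurable `g_b`,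
since `Y` is standard Borel, and `φ (b, u) = g_b u` works: as `U` is uniform and independent of `X`
under `R ∈ {P, Q}`, the law of `φ (X, U)` under `R` is `R[X = 1] μ₁ + R[X = 0] μ₀`.
-/

theorem mixture_weights_nonneg {p q t : ℝ} (hp : p ∈ Ioo 0 1)
    (ht : t ∈ uIcc (q / p) ((1 - q) / (1 - p))) :
    0 ≤ ((1 - q) - (1 - p) * t) / (p - q) ∧ 0 ≤ (p * t - q) / (p - q) := by
  obtain ⟨hp₀, hp₁⟩ := hp
  have hp₁' : 0 < 1 - p := sub_pos.mpr hp₁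
  rcases mem_uIcc.mp ht with ⟨hlo, hhi⟩ | ⟨hlo, hhi⟩
  · rw [div_le_iff₀' hp₀] at hlo
    rw [le_div_iff₀' hp₁'] at hhi
    have : q ≤ p := by nlinarith
    exact ⟨div_nonneg (by linarith) (by linarith), div_nonneg (by linarith) (by linarith)⟩
  · rw [div_le_iff₀' hp₁'] at hlo
    rw [le_div_iff₀' hp₀] at hhi
    have : p ≤ q := by nlinarith
    exact ⟨div_nonneg_of_nonpos (by linarith) (by linarith),
      div_nonneg_of_nonpos (by linarith) (by linarith)⟩

theorem eq_one_of_ofReal_mul_add_ofReal_mul_eq_one {p q : ℝ} (hp : p ∈ Ioo 0 1)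
    (hq : q ∈ Icc 0 1) (hpq : p ≠ q) {a b : ℝ≥0∞}
    (hpab : ENNReal.ofReal p * a + ENNReal.ofReal (1 - p) * b = 1)
    (hqab : ENNReal.ofReal q * a + ENNReal.ofReal (1 - q) * b = 1) : a = 1 ∧ b = 1 := by
  have ha : a ≠ ∞ := by
    rintro rfl
    simp [hp.1] at hpab
  have hb : b ≠ ∞ := by
    rintro rfl
    simp [hp.2] at hpab
  have hp₁ : 0 ≤ 1 - p := by linarith [hp.2]
  have hq₁ : 0 ≤ 1 - q := by linarith [hq.2]
  replace hpab := congrArg ENNReal.toReal hpab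
  replace hqab := congrArg ENNReal.toReal hqab
  simp only [toReal_add (mul_ne_top ofReal_ne_top ha) (mul_ne_top ofReal_ne_top hb), toReal_mul,
    toReal_ofReal hp.1.le, toReal_ofReal hp₁, toReal_ofReal hq.1, toReal_ofReal hq₁,
    toReal_one] at hpab hqab
  have hab : a.toReal = b.toReal := by
    have : (p - q) * (a.toReal - b.toReal) = 0 := by linear_combination hpab - hqab
    simpa [sub_eq_zero, hpq] using this
  constructor
  · rw [← ofReal_toReal ha, show a.toReal = 1 by linear_combination hpab + (1 - p) * hab,
      ofReal_one]
  · rw [← ofReal_toReal hb, show b.toReal = 1 by linear_combination hpab - p * hab, ofReal_one]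

section Mixture

variable {Z : Type*} [MeasurableSpace Z] {μ ν : Measure Z} {p q : ℝ}

theorem smul_withDensity_ofReal_add_smul_withDensity_ofReal {f g : Z → ℝ} (hf : Measurable f)
    (hg : Measurable g) (hf₀ : ∀ᵐ y ∂μ, 0 ≤ f y) (hg₀ : ∀ᵐ y ∂μ, 0 ≤ g y) {a b : ℝ} (ha : 0 ≤ a)
    (hb : 0 ≤ b) :
    ENNReal.ofReal a • μ.withDensity (fun y => ENNReal.ofReal (f y))
      + ENNReal.ofReal b • μ.withDensity (fun y => ENNReal.ofReal (g y))
    = μ.withDensity (fun y => ENNReal.ofReal (a * f y + b * g y)) := by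
  rw [← withDensity_smul _ (by fun_prop), ← withDensity_smul _ (by fun_prop),
    ← withDensity_add_left (by fun_prop)]
  refine withDensity_congr_ae ?_
  filter_upwards [hf₀, hg₀] with y hfy hgy
  simp only [Pi.add_apply, Pi.smul_apply, smul_eq_mul]
  rw [← ofReal_mul ha, ← ofReal_mul hb, ← ofReal_add (mul_nonneg ha hfy) (mul_nonneg hb hgy)]

theorem exists_mixture_of_rnDeriv_mem_uIcc_of_ne [IsProbabilityMeasure μ] [IsProbabilityMeasure ν]
    (hac : ν ≪ μ) (hp : p ∈ Ioo 0 1) (hq : q ∈ Icc 0 1) (hpq : p ≠ q)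
    (hrn : ∀ᵐ y ∂μ, (ν.rnDeriv μ y).toReal ∈ uIcc (q / p) ((1 - q) / (1 - p))) :
    ∃ μ₁ μ₀ : Measure Z, IsProbabilityMeasure μ₁ ∧ IsProbabilityMeasure μ₀ ∧
      ENNReal.ofReal p • μ₁ + ENNReal.ofReal (1 - p) • μ₀ = μ ∧
      ENNReal.ofReal q • μ₁ + ENNReal.ofReal (1 - q) • μ₀ = ν := by
  set t : Z → ℝ := fun y => (ν.rnDeriv μ y).toReal
  have ht : Measurable t := (Measure.measurable_rnDeriv ν μ).ennreal_toReal
  set w₁ : Z → ℝ := fun y => ((1 - q) - (1 - p) * t y) / (p - q)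
  set w₀ : Z → ℝ := fun y => (p * t y - q) / (p - q)
  have hw : ∀ᵐ y ∂μ, 0 ≤ w₁ y ∧ 0 ≤ w₀ y := hrn.mono fun y hy => mixture_weights_nonneg hp hy
  have hmix : ∀ r ∈ Icc (0 : ℝ) 1,
      ENNReal.ofReal r • μ.withDensity (fun y => ENNReal.ofReal (w₁ y))
        + ENNReal.ofReal (1 - r) • μ.withDensity (fun y => ENNReal.ofReal (w₀ y))
      = μ.withDensity (fun y => ENNReal.ofReal ((r - q + (p - r) * t y) / (p - q))) := by
    rintro r ⟨hr₀, hr₁⟩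
    rw [smul_withDensity_ofReal_add_smul_withDensity_ofReal (by fun_prop) (by fun_prop)
      (hw.mono fun _ => And.left) (hw.mono fun _ => And.right) hr₀ (sub_nonneg.2 hr₁)]
    congr with y
    congr 1
    simp only [w₁, w₀]
    field_simp [sub_ne_zero.2 hpq]
    ring
  have hμ := hmix p ⟨hp.1.le, hp.2.le⟩
  have hν := hmix q hq
  simp only [sub_self, zero_mul, add_zero, zero_add, div_self (sub_ne_zero.2 hpq), ofReal_one]
    at hμ hν
  rw [← Pi.one_def, withDensity_one] at hμ
  simp only [mul_div_cancel_left₀ _ (sub_ne_zero.2 hpq)] at hν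
  rw [withDensity_congr_ae (g := ν.rnDeriv μ)
    ((Measure.rnDeriv_lt_top ν μ).mono fun y hy => ofReal_toReal hy.ne),
    Measure.withDensity_rnDeriv_eq ν μ hac] at hν
  obtain ⟨h₁, h₀⟩ := eq_one_of_ofReal_mul_add_ofReal_mul_eq_one hp hq hpq
    (by simpa only [Measure.add_apply, Measure.smul_apply, smul_eq_mul, measure_univ]
      using congr($hμ univ))
    (by simpa only [Measure.add_apply, Measure.smul_apply, smul_eq_mul, measure_univ]
      using congr($hν univ))
  exact ⟨_, _, ⟨h₁⟩, ⟨h₀⟩, hμ, hν⟩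

theorem exists_mixture_of_rnDeriv_mem_uIcc [IsProbabilityMeasure μ] [IsProbabilityMeasure ν]
    (hac : ν ≪ μ) (hp : p ∈ Ioo 0 1) (hq : q ∈ Icc 0 1)
    (hrn : ∀ᵐ y ∂μ, (ν.rnDeriv μ y).toReal ∈ uIcc (q / p) ((1 - q) / (1 - p))) :
    ∃ μ₁ μ₀ : Measure Z, IsProbabilityMeasure μ₁ ∧ IsProbabilityMeasure μ₀ ∧
      ENNReal.ofReal p • μ₁ + ENNReal.ofReal (1 - p) • μ₀ = μ ∧
      ENNReal.ofReal q • μ₁ + ENNReal.ofReal (1 - q) • μ₀ = ν := by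
  rcases eq_or_ne p q with rfl | hpq
  · have hνμ : ν = μ := by
      refine (Measure.rnDeriv_eq_one_iff_eq hac).1 ?_
      filter_upwards [hrn, Measure.rnDeriv_lt_top ν μ] with y hy hy_top
      rw [div_self hp.1.ne', div_self (sub_pos.2 hp.2).ne', uIcc_self, mem_singleton_iff] at hy
      rw [Pi.one_apply, ← ofReal_toReal hy_top.ne, hy, ofReal_one]
    have hμ : ENNReal.ofReal p • μ + ENNReal.ofReal (1 - p) • μ = μ := by
      rw [← add_smul, ← ofReal_add hp.1.le (sub_pos.2 hp.2).le, add_sub_cancel, ofReal_one,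
        one_smul]
    exact ⟨μ, μ, inferInstance, inferInstance, hμ, hνμ ▸ hμ⟩
  · exact exists_mixture_of_rnDeriv_mem_uIcc_of_ne hac hp hq hpq hrn

end Mixture

theorem exists_measurable_map_volume_Icc_eq {Y : Type*} [MeasurableSpace Y]
    [StandardBorelSpace Y] (μ : Measure Y) [IsProbabilityMeasure μ] :
    ∃ g : ℝ → Y, Measurable g ∧ (volume.restrict (Icc (0 : ℝ) 1)).map g = μ := by
  have := nonempty_of_isProbabilityMeasure μ
  obtain ⟨f, hf, rfl⟩ := μ.exists_measurable_map_eq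
  refine ⟨f ∘ projIcc 0 1 zero_le_one, hf.comp continuous_projIcc.measurable, ?_⟩
  rw [← unitInterval.measurePreserving_coe.map_eq,
    Measure.map_map (hf.comp continuous_projIcc.measurable) measurable_subtype_coe]
  congr 1
  ext u
  simp [projIcc_val]

theorem MeasureTheory.Measure.map_prod_bool {β γ : Type*} [MeasurableSpace β] [MeasurableSpace γ]
    (m : Measure Bool) [IsFiniteMeasure m] (ν : Measure β) [SFinite ν]
    {φ : Bool × β → γ} (hφ : Measurable φ) :
    (m.prod ν).map φ
      = m {true} • ν.map (fun u => φ (true, u)) + m {false} • ν.map (fun u => φ (false, u)) := by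
  have hm : m = m {true} • Measure.dirac true + m {false} • Measure.dirac false := by
    rw [Measure.ext_iff_singleton]
    rintro (_ | _) <;> simp
  conv_lhs => rw [hm]
  rw [Measure.add_prod, Measure.prod_smul_left, Measure.prod_smul_left, Measure.dirac_prod,
    Measure.dirac_prod, Measure.map_add _ _ hφ, Measure.map_smul, Measure.map_smul,
    Measure.map_map hφ measurable_prodMk_left, Measure.map_map hφ measurable_prodMk_left]
  rfl

theorem map_comp_pair_eq_mixture {Ω β γ : Type*} [MeasurableSpace Ω] [MeasurableSpace β]
    [MeasurableSpace γ] {R : Measure Ω} [IsProbabilityMeasure R] {X : Ω → Bool} {U : Ω → β}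
    (hX : Measurable X) (hU : Measurable U) {r : ℝ} (hr : 0 ≤ r)
    (hRX : R {ω | X ω = true} = ENNReal.ofReal r)
    (hind : R.map (fun ω => (X ω, U ω)) = (R.map X).prod (R.map U))
    {φ : Bool × β → γ} (hφ : Measurable φ) :
    R.map (fun ω => φ (X ω, U ω)) = ENNReal.ofReal r • (R.map U).map (fun u => φ (true, u))
      + ENNReal.ofReal (1 - r) • (R.map U).map (fun u => φ (false, u)) := by
  have := Measure.isProbabilityMeasure_map (μ := R) hX.aemeasurable
  have htrue : R.map X {true} = ENNReal.ofReal r := by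
    rwa [Measure.map_apply hX (measurableSet_singleton _)]
  have hfalse : R.map X {false} = ENNReal.ofReal (1 - r) := by
    rw [show ({false} : Set Bool) = {true}ᶜ from (Bool.compl_singleton true).symm,
      prob_compl_eq_one_sub (measurableSet_singleton _), htrue,
      ENNReal.ofReal_sub _ hr, ENNReal.ofReal_one]
  change R.map (φ ∘ fun ω => (X ω, U ω)) = _
  rw [← Measure.map_map hφ (hX.prodMk hU), hind, Measure.map_prod_bool _ _ hφ, htrue, hfalse]

/-- One-bit/two-scenarios inverse-transformation representability
(the implication (2) ⇒ (1) of the paper's Theorem): if the law of Y' under Q is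
absolutely continuous w.r.t. its law under P with Radon–Nikodym derivative pinched
between min(q/p,(1−q)/(1−p)) and max(q/p,(1−q)/(1−p)), then Y' can be simulated
(in law, under both P and Q) by a measurable function of the bit X and the
independent uniform seed U. -/
theorem one_bit_two_scenarios_representation
    {Ω : Type*} [MeasurableSpace Ω]
    {Y : Type*} [MetricSpace Y] [TopologicalSpace.SeparableSpace Y] [CompleteSpace Y]
    [MeasurableSpace Y] [BorelSpace Y]
    (P Q : Measure Ω) [IsProbabilityMeasure P] [IsProbabilityMeasure Q]
    (X : Ω → Bool) (Y' : Ω → Y) (U : Ω → ℝ)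
    (hX : Measurable X) (hY' : Measurable Y') (hU : Measurable U)
    (p q : ℝ) (hp : p ∈ Set.Ioo (0:ℝ) 1) (hq : q ∈ Set.Icc (0:ℝ) 1)
    (hPX : P {ω | X ω = true} = ENNReal.ofReal p)
    (hQX : Q {ω | X ω = true} = ENNReal.ofReal q)
    (hPU : Measure.map U P = volume.restrict (Set.Icc (0:ℝ) 1))
    (hQU : Measure.map U Q = volume.restrict (Set.Icc (0:ℝ) 1))
    (hPind : Measure.map (fun ω => (X ω, U ω)) P
      = (Measure.map X P).prod (Measure.map U P))
    (hQind : Measure.map (fun ω => (X ω, U ω)) Q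
      = (Measure.map X Q).prod (Measure.map U Q))
    (hac : Measure.map Y' Q ≪ Measure.map Y' P)
    (hrn : ∀ᵐ y ∂ (Measure.map Y' P),
      min (q / p) ((1 - q) / (1 - p))
          ≤ ((Measure.map Y' Q).rnDeriv (Measure.map Y' P) y).toReal ∧
        ((Measure.map Y' Q).rnDeriv (Measure.map Y' P) y).toReal
          ≤ max (q / p) ((1 - q) / (1 - p))) :
    ∃ φ : Bool × ℝ → Y, Measurable φ ∧
      Measure.map Y' P = Measure.map (fun ω => φ (X ω, U ω)) P ∧
      Measure.map Y' Q = Measure.map (fun ω => φ (X ω, U ω)) Q := by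
  have := Measure.isProbabilityMeasure_map (μ := P) hY'.aemeasurable
  have := Measure.isProbabilityMeasure_map (μ := Q) hY'.aemeasurable
  obtain ⟨μ₁, μ₀, _, _, hP, hQ⟩ := exists_mixture_of_rnDeriv_mem_uIcc hac hp hq hrn
  obtain ⟨g₁, hg₁, rfl⟩ := exists_measurable_map_volume_Icc_eq μ₁
  obtain ⟨g₀, hg₀, rfl⟩ := exists_measurable_map_volume_Icc_eq μ₀
  have hφ : Measurable fun z : Bool × ℝ => cond z.1 (g₁ z.2) (g₀ z.2) :=
    measurable_from_prod_countable_right fun b => by cases b <;> assumption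
  refine ⟨_, hφ, ?_, ?_⟩
  · rw [map_comp_pair_eq_mixture hX hU hp.1.le hPX hPind hφ, hPU]
    exact hP.symm
  · rw [map_comp_pair_eq_mixture hX hU hq.1 hQX hQind hφ, hQU]
    exact hQ.symm
end

section
/- With the same setup as the two-scenarios inverse-transformation theorem (p ∈ (0,1), q ∈ [0,1], p ≠ q, X Bernoulli with P[X=1]=p and Q[X=1]=q), the following are equivalent: (a) there exist probability measures μ0, μ1 on F_Y with P_{Y'} = (1−p)μ0 + pμ1 and Q_{Y'} = (1−q)μ0 + qμ1; (b) the signed measures (q/(q−p))P_{Y'} − (p/(q−p))Q_{Y'} and ((1−p)/(q−p))Q_{Y'} − ((1−q)/(q−p))P_{Y'} are both nonnegative. -/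
/-!
Both mixture equations are linear in `(μ₀, μ₁)` with the mixing matrix `[[1 - p, p], [1 - q, q]]`,
whose determinant is `q - p ≠ 0`. Inverting it expresses `μ₀` and `μ₁` as exactly the two signed
combinations of `P_{Y'}` and `Q_{Y'}` in (b), so (a) forces them to be nonnegative. Conversely,
nonnegative signed measures are measures, and since the matrix has row sums `1`, the inverse
preserves total mass `1`.
-/

open MeasureTheory

namespace MeasureTheory.Measure

variable {Y : Type*} [MeasurableSpace Y]

instance isFiniteMeasure_ofReal_smul (μ : Measure Y) [IsFiniteMeasure μ] (c : ℝ) :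
    IsFiniteMeasure (ENNReal.ofReal c • μ) :=
  μ.smul_finite ENNReal.ofReal_ne_top

theorem real_mixture_apply (μ₀ μ₁ : Measure Y) [IsFiniteMeasure μ₀] [IsFiniteMeasure μ₁]
    {t : ℝ} (ht : t ∈ Set.Icc (0 : ℝ) 1) (A : Set Y) :
    (ENNReal.ofReal (1 - t) • μ₀ + ENNReal.ofReal t • μ₁).real A =
      (1 - t) * μ₀.real A + t * μ₁.real A := by
  rw [measureReal_add_apply, measureReal_ennreal_smul_apply, measureReal_ennreal_smul_apply,
    ENNReal.toReal_ofReal (by linarith [ht.2]), ENNReal.toReal_ofReal ht.1]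

theorem exists_real_eq_smul_sub_smul (μ ν : Measure Y) [IsFiniteMeasure μ] [IsFiniteMeasure ν]
    (a b : ℝ) (h : ∀ A, MeasurableSet A → 0 ≤ a * μ.real A - b * ν.real A) :
    ∃ ρ : Measure Y, IsFiniteMeasure ρ ∧
      ∀ A, MeasurableSet A → ρ.real A = a * μ.real A - b * ν.real A := by
  set s := a • μ.toSignedMeasure - b • ν.toSignedMeasure
  have hs : ∀ A, MeasurableSet A → s A = a * μ.real A - b * ν.real A := fun A hA => by
    simp [s, toSignedMeasure_apply_measurable hA]
  have hs_nonneg : 0 ≤[Set.univ] s := by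
    rw [VectorMeasure.le_restrict_univ_iff_le, VectorMeasure.le_iff]
    intro A hA
    simpa [hs A hA] using h A hA
  refine ⟨s.toMeasureOfZeroLE Set.univ .univ hs_nonneg, inferInstance, fun A hA => ?_⟩
  rw [SignedMeasure.toMeasureOfZeroLE_real_apply _ _ _ hA, Set.univ_inter, hs A hA]

end MeasureTheory.Measure

theorem mixture_eq_iff {p q : ℝ} (hpq : p ≠ q) (x y u v : ℝ) :
    (x = (1 - p) * u + p * v ∧ y = (1 - q) * u + q * v) ↔
      (u = q / (q - p) * x - p / (q - p) * y ∧
        v = (1 - p) / (q - p) * y - (1 - q) / (q - p) * x) := by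
  have : q - p ≠ 0 := sub_ne_zero.mpr hpq.symm
  constructor
  · rintro ⟨rfl, rfl⟩
    constructor <;> field_simp <;> ring
  · rintro ⟨rfl, rfl⟩
    constructor <;> field_simp <;> ring

/-- Equivalence of the mixture representation (a) and nonnegativity of the two
signed measures (b) in the inverse-transformation theorem. -/
theorem mixture_iff_signed_nonneg
    {Y : Type*} [MeasurableSpace Y]
    (νP νQ : Measure Y) [IsProbabilityMeasure νP] [IsProbabilityMeasure νQ]
    (p q : ℝ) (hp : p ∈ Set.Ioo (0:ℝ) 1) (hq : q ∈ Set.Icc (0:ℝ) 1) (hpq : p ≠ q) :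
    (∃ μ0 μ1 : Measure Y, IsProbabilityMeasure μ0 ∧ IsProbabilityMeasure μ1 ∧
        νP = ENNReal.ofReal (1 - p) • μ0 + ENNReal.ofReal p • μ1 ∧
        νQ = ENNReal.ofReal (1 - q) • μ0 + ENNReal.ofReal q • μ1)
    ↔ (∀ A : Set Y, MeasurableSet A →
        0 ≤ (q / (q - p)) * (νP A).toReal - (p / (q - p)) * (νQ A).toReal ∧
        0 ≤ ((1 - p) / (q - p)) * (νQ A).toReal - ((1 - q) / (q - p)) * (νP A).toReal) := by
  have hp' : p ∈ Set.Icc (0 : ℝ) 1 := Set.Ioo_subset_Icc_self hp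
  constructor
  · rintro ⟨μ0, μ1, _, _, rfl, rfl⟩ A -
    obtain ⟨h0, h1⟩ := (mixture_eq_iff hpq _ _ _ _).1
      ⟨Measure.real_mixture_apply μ0 μ1 hp' A, Measure.real_mixture_apply μ0 μ1 hq A⟩
    exact ⟨measureReal_nonneg.trans_eq h0, measureReal_nonneg.trans_eq h1⟩
  · intro h
    obtain ⟨μ0, _, hμ0⟩ := Measure.exists_real_eq_smul_sub_smul νP νQ _ _ fun A hA => (h A hA).1
    obtain ⟨μ1, _, hμ1⟩ := Measure.exists_real_eq_smul_sub_smul νQ νP _ _ fun A hA => (h A hA).2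
    have hmix (A : Set Y) (hA : MeasurableSet A) :=
      (mixture_eq_iff hpq (νP.real A) (νQ.real A) _ _).2 ⟨hμ0 A hA, hμ1 A hA⟩
    obtain ⟨hunit0, hunit1⟩ := (mixture_eq_iff hpq 1 1 1 1).1 ⟨by ring, by ring⟩
    refine ⟨μ0, μ1, ?_, ?_, ?_, ?_⟩
    · rw [isProbabilityMeasure_iff_real, hμ0 _ .univ, probReal_univ, probReal_univ, ← hunit0]
    · rw [isProbabilityMeasure_iff_real, hμ1 _ .univ, probReal_univ, probReal_univ, ← hunit1]
    · ext A hA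
      rw [← measureReal_eq_measureReal_iff, Measure.real_mixture_apply _ _ hp']
      exact (hmix A hA).1
    · ext A hA
      rw [← measureReal_eq_measureReal_iff, Measure.real_mixture_apply _ _ hq]
      exact (hmix A hA).2
end

section
/- Let a = 2·ln(27/16) and let f : [0,1]^2 → ℝ be defined by f(x,y) = (36/(1+8a))·[ ((5 − 6(y+x))/(6(y−x)))·1_{Q1}(x,y) + a·1_{Q2}(x,y) + 2a·1_{Q3∪Q4∪Q5}(x,y) + 1_{Q6}(x,y) ], where Q1 = [0,1/6]×[1/3,1/2), Q2 = [0,1/6]×[1/2,2/3], Q3 = [0,1/6]×[5/6,1], Q4 = [5/6,1]×[5/6,1], Q5 = [5/6,1]×[0,1/6], Q6 = [1/3,1/2]×[2/3,5/6]. Then f is a probability density: f ≥ 0 and ∫_{[0,1]^2} f(x,y) dx dy = 1. -/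
open MeasureTheory Set

/-- The normalization constant a = 2·ln(27/16). -/
noncomputable def aNorm : ℝ := 2 * Real.log (27 / 16)

/-- The base density f of the hard instance construction. -/
noncomputable def baseDensity : ℝ × ℝ → ℝ := fun z =>
  (36 / (1 + 8 * aNorm)) *
    ((Set.Icc (0:ℝ) (1/6) ×ˢ Set.Ico (1/3:ℝ) (1/2)).indicator
        (fun w => (5 - 6 * (w.2 + w.1)) / (6 * (w.2 - w.1))) z
      + aNorm * (Set.Icc (0:ℝ) (1/6) ×ˢ Set.Icc (1/2:ℝ) (2/3)).indicator
          (fun _ => (1:ℝ)) z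
      + 2 * aNorm * ((Set.Icc (0:ℝ) (1/6) ×ˢ Set.Icc (5/6:ℝ) 1)
          ∪ (Set.Icc (5/6:ℝ) 1 ×ˢ Set.Icc (5/6:ℝ) 1)
          ∪ (Set.Icc (5/6:ℝ) 1 ×ˢ Set.Icc (0:ℝ) (1/6))).indicator
          (fun _ => (1:ℝ)) z
      + (Set.Icc (1/3:ℝ) (1/2) ×ˢ Set.Icc (2/3:ℝ) (5/6)).indicator
          (fun _ => (1:ℝ)) z)

/-! The pieces of `baseDensity` lie in the unit square; `Q₂` and `Q₆` have area `1/36` and the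
three corner squares total area `3/36`, so the mass is `36/(1+8a) · (I + a/36 + 6a/36 + 1/36)`
with `I = ∫_{Q₁} (5 - 6(y+x))/(6(y-x))`, and it remains to show `I = a/36`.
In `y` the integrand is `-1 + (5 - 12x)/(6(y - x))`, so the inner integral is
`-1/6 + (5 - 12x)/6 · (log (1/2 - x) - log (1/3 - x))`. For the outer one,
`(5 - 12x) log (c - x)` has the antiderivative
`(c - x)(6x + 6c - 5) log (c - x) + 3x² + (6c - 5)x`,
and evaluating at `0` and `1/6` gives `I = (3 log 3 - 4 log 2)/18 = a/36`. -/

open Real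

lemma setIntegral_indicator_of_subset {X : Type*} [MeasurableSpace X] {μ : Measure X}
    {s t : Set X} (ht : MeasurableSet t) (hts : t ⊆ s) (f : X → ℝ) :
    ∫ x in s, t.indicator f x ∂μ = ∫ x in t, f x ∂μ := by
  rw [setIntegral_indicator ht, inter_eq_self_of_subset_right hts]

lemma measureReal_Icc_prod_Icc {a b c d : ℝ} (hab : a ≤ b) (hcd : c ≤ d) :
    volume.real (Icc a b ×ˢ Icc c d) = (b - a) * (d - c) := by
  rw [Measure.volume_eq_prod, measureReal_prod_prod, Real.volume_real_Icc_of_le hab,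
    Real.volume_real_Icc_of_le hcd]

lemma hasDerivAt_antideriv_linear_mul_log_sub (α β : ℝ) {c x : ℝ} (hx : x ≠ c) :
    HasDerivAt
      (fun x => (c - x) * (β * x + β * c - α) * log (c - x) + β / 2 * x ^ 2 + (β * c - α) * x)
      ((α - 2 * β * x) * log (c - x)) x := by
  have hcx : c - x ≠ 0 := sub_ne_zero.2 hx.symm
  have hlog : HasDerivAt (fun x => log (c - x)) (-1 / (c - x)) x :=
    ((hasDerivAt_id x).const_sub c).log hcx
  have := (((((hasDerivAt_id x).const_sub c).mul
    ((((hasDerivAt_id x).const_mul β).add_const (β * c)).sub_const α)).mul hlog).add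
    (((hasDerivAt_id x).pow 2).const_mul (β / 2))).add ((hasDerivAt_id x).const_mul (β * c - α))
  refine this.congr_deriv ?_
  simp only [Pi.mul_apply, id]; field_simp; ring

lemma aNorm_eq : aNorm = 2 * (3 * log 3 - 4 * log 2) := by
  rw [aNorm, log_div (by norm_num) (by norm_num), show (27:ℝ) = 3 ^ 3 by norm_num,
    show (16:ℝ) = 2 ^ 4 by norm_num, log_pow, log_pow]
  push_cast; ring

lemma aNorm_pos : 0 < aNorm := mul_pos two_pos (log_pos (by norm_num))

lemma integral_q1_inner {x a b : ℝ} (hxa : x < a) (hab : a ≤ b) :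
    ∫ y in a..b, (5 - 6 * (y + x)) / (6 * (y - x)) =
      -(b - a) + (5 - 12 * x) / 6 * (log (b - x) - log (a - x)) := by
  have hpos : ∀ y ∈ uIcc a b, 0 < y - x := fun y hy => by
    rw [uIcc_of_le hab] at hy; linarith [hy.1]
  have hderiv : ∀ y ∈ uIcc a b, HasDerivAt (fun y => -y + (5 - 12 * x) / 6 * log (y - x))
      ((5 - 6 * (y + x)) / (6 * (y - x))) y := fun y hy => by
    have := (hasDerivAt_id y).neg.add
      ((((hasDerivAt_id y).sub_const x).log (hpos y hy).ne').const_mul ((5 - 12 * x) / 6))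
    refine this.congr_deriv ?_
    have := (hpos y hy).ne'
    simp only [id]; field_simp; ring
  have hint : IntervalIntegrable (fun y => (5 - 6 * (y + x)) / (6 * (y - x))) volume a b :=
    ContinuousOn.intervalIntegrable (by
      refine ContinuousOn.div (by fun_prop) (by fun_prop) fun y hy => ?_
      have := hpos y hy; positivity)
  rw [intervalIntegral.integral_eq_sub_of_hasDerivAt hderiv hint]
  ring

lemma integral_q1_outer :
    ∫ x in (0:ℝ)..(1/6), (-(1/2 - 1/3) + (5 - 12 * x) / 6 * (log (1/2 - x) - log (1/3 - x))) =
      aNorm / 36 := by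
  set F : ℝ → ℝ → ℝ := fun c x =>
    (c - x) * (6 * x + 6 * c - 5) * log (c - x) + 6 / 2 * x ^ 2 + (6 * c - 5) * x with hF
  have hlt : ∀ x ∈ uIcc (0:ℝ) (1/6), x < 1/3 := fun x hx => by
    rw [uIcc_of_le (by norm_num)] at hx; linarith [hx.2]
  have hderiv : ∀ x ∈ uIcc (0:ℝ) (1/6),
      HasDerivAt (fun x => -(1/2 - 1/3) * x + (F (1/2) x - F (1/3) x) / 6)
        (-(1/2 - 1/3) + (5 - 12 * x) / 6 * (log (1/2 - x) - log (1/3 - x))) x := fun x hx => by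
    have h := ((hasDerivAt_id x).const_mul (-(1/2 - 1/3) : ℝ)).add
      (((hasDerivAt_antideriv_linear_mul_log_sub 5 6 (c := 1/2) (by linarith [hlt x hx])).sub
        (hasDerivAt_antideriv_linear_mul_log_sub 5 6 (c := 1/3) (hlt x hx).ne)).div_const 6)
    refine h.congr_deriv ?_
    ring
  have hcont : ContinuousOn
      (fun x => -(1/2 - 1/3) + (5 - 12 * x) / 6 * (log (1/2 - x) - log (1/3 - x)))
      (uIcc (0:ℝ) (1/6)) := by
    refine continuousOn_const.add (ContinuousOn.mul (by fun_prop) (.sub ?_ ?_)) <;>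
      refine ContinuousOn.log (by fun_prop) fun x hx => ?_ <;> linarith [hlt x hx]
  rw [intervalIntegral.integral_eq_sub_of_hasDerivAt hderiv hcont.intervalIntegrable]
  have l2 : log (1/2 : ℝ) = -log 2 := by rw [one_div, log_inv]
  have l3 : log (1/3 : ℝ) = -log 3 := by rw [one_div, log_inv]
  have l6 : log (1/6 : ℝ) = -(log 2 + log 3) := by
    rw [one_div, log_inv, show (6:ℝ) = 2 * 3 by norm_num, log_mul (by norm_num) (by norm_num)]
  norm_num [hF]
  rw [l2, l3, l6, aNorm_eq]
  ring

lemma integrableOn_q1 :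
    IntegrableOn (fun w : ℝ × ℝ => (5 - 6 * (w.2 + w.1)) / (6 * (w.2 - w.1)))
      (Icc (0:ℝ) (1/6) ×ˢ Ico (1/3:ℝ) (1/2)) := by
  refine (ContinuousOn.integrableOn_compact (isCompact_Icc.prod isCompact_Icc) ?_).mono_set
    (prod_mono subset_rfl Ico_subset_Icc_self)
  refine ContinuousOn.div (by fun_prop) (by fun_prop) fun w hw => ?_
  have := hw.1.2; have := hw.2.1
  nlinarith

lemma setIntegral_q1 :
    ∫ w in Icc (0:ℝ) (1/6) ×ˢ Ico (1/3:ℝ) (1/2), (5 - 6 * (w.2 + w.1)) / (6 * (w.2 - w.1)) =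
      aNorm / 36 := by
  rw [Measure.volume_eq_prod, setIntegral_prod _ integrableOn_q1, integral_Icc_eq_integral_Ioc,
    ← intervalIntegral.integral_of_le (by norm_num), ← integral_q1_outer]
  refine intervalIntegral.integral_congr fun x hx => ?_
  rw [uIcc_of_le (by norm_num)] at hx
  rw [integral_Ico_eq_integral_Ioo, ← integral_Ioc_eq_integral_Ioo,
    ← intervalIntegral.integral_of_le (by norm_num), integral_q1_inner (by linarith [hx.2])
    (by norm_num)]

lemma baseDensity_nonneg (z : ℝ × ℝ) : 0 ≤ baseDensity z := by
  have ha := aNorm_pos.le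
  have hq1 : 0 ≤ (Icc (0:ℝ) (1/6) ×ˢ Ico (1/3:ℝ) (1/2)).indicator
      (fun w => (5 - 6 * (w.2 + w.1)) / (6 * (w.2 - w.1))) z :=
    indicator_nonneg (fun w hw => div_nonneg (by linarith [hw.1.2, hw.2.2])
      (by linarith [hw.1.2, hw.2.1])) z
  have hone : ∀ Q : Set (ℝ × ℝ), 0 ≤ Q.indicator (fun _ => (1:ℝ)) z :=
    fun Q => indicator_nonneg (fun _ _ => zero_le_one) z
  unfold baseDensity
  refine mul_nonneg (by positivity) (add_nonneg (add_nonneg (add_nonneg hq1 ?_) ?_) (hone _)) <;>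
    exact mul_nonneg (by positivity) (hone _)

lemma measureReal_corners :
    volume.real ((Icc (0:ℝ) (1/6) ×ˢ Icc (5/6:ℝ) 1) ∪ (Icc (5/6:ℝ) 1 ×ˢ Icc (5/6:ℝ) 1)
      ∪ (Icc (5/6:ℝ) 1 ×ˢ Icc (0:ℝ) (1/6))) = 3 / 36 := by
  have hlow : Disjoint (Icc (0:ℝ) (1/6)) (Icc (5/6) 1) :=
    disjoint_left.2 fun x h₁ h₂ => by linarith [h₁.2, h₂.1]
  have hfin (a b c d : ℝ) : volume (Icc a b ×ˢ Icc c d) ≠ ⊤ :=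
    (isCompact_Icc.prod isCompact_Icc).measure_ne_top
  rw [measureReal_union (disjoint_union_left.2 ⟨disjoint_prod.2 (.inr hlow.symm),
      disjoint_prod.2 (.inr hlow.symm)⟩) (measurableSet_Icc.prod measurableSet_Icc)
      (measure_union_ne_top (hfin _ _ _ _) (hfin _ _ _ _)) (hfin _ _ _ _),
    measureReal_union (disjoint_prod.2 (.inl hlow)) (measurableSet_Icc.prod measurableSet_Icc)
      (hfin _ _ _ _) (hfin _ _ _ _)]
  repeat rw [measureReal_Icc_prod_Icc (by norm_num) (by norm_num)]
  norm_num

lemma setIntegral_unitSquare_indicator_q1 :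
    ∫ z in Icc (0:ℝ) 1 ×ˢ Icc (0:ℝ) 1,
      (Icc (0:ℝ) (1/6) ×ˢ Ico (1/3:ℝ) (1/2)).indicator
        (fun w => (5 - 6 * (w.2 + w.1)) / (6 * (w.2 - w.1))) z = aNorm / 36 := by
  rw [setIntegral_indicator_of_subset (measurableSet_Icc.prod measurableSet_Ico)
    (prod_mono (Icc_subset_Icc le_rfl (by norm_num))
      (Ico_subset_Icc_self.trans (Icc_subset_Icc (by norm_num) (by norm_num)))), setIntegral_q1]

lemma setIntegral_unitSquare_baseDensity :
    ∫ z in Icc (0:ℝ) 1 ×ˢ Icc (0:ℝ) 1, baseDensity z =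
      36 / (1 + 8 * aNorm) *
        (aNorm / 36 + aNorm * (1 / 36) + 2 * aNorm * (3 / 36) + 1 / 36) := by
  set S := Icc (0:ℝ) 1 ×ˢ Icc (0:ℝ) 1
  have : IsFiniteMeasure (volume.restrict S) :=
    isFiniteMeasure_restrict.2 (isCompact_Icc.prod isCompact_Icc).measure_lt_top.ne
  have hone (Q : Set (ℝ × ℝ)) (hQ : MeasurableSet Q) (c : ℝ) :
      Integrable (fun z => c * Q.indicator (fun _ => (1:ℝ)) z) (volume.restrict S) :=
    ((integrable_const 1).indicator hQ).const_mul c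
  have hQ1 := (integrableOn_q1.integrable_indicator
    (measurableSet_Icc.prod measurableSet_Ico)).integrableOn (s := S)
  have hsub {a b c d : ℝ} (ha : 0 ≤ a) (hb : b ≤ 1) (hc : 0 ≤ c) (hd : d ≤ 1) :
      Icc a b ×ˢ Icc c d ⊆ S :=
    prod_mono (Icc_subset_Icc ha hb) (Icc_subset_Icc hc hd)
  unfold baseDensity
  rw [integral_const_mul, integral_add ((hQ1.fun_add (hone _ (by measurability) _)).fun_add
      (hone _ (by measurability) _)) (by simpa using hone _ (by measurability) 1),
    integral_add (hQ1.fun_add (hone _ (by measurability) _)) (hone _ (by measurability) _),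
    integral_add hQ1 (hone _ (by measurability) _), integral_const_mul, integral_const_mul,
    setIntegral_unitSquare_indicator_q1,
    setIntegral_indicator_of_subset (by measurability)
      (hsub le_rfl (by norm_num) (by norm_num) (by norm_num)),
    setIntegral_indicator_of_subset (by measurability) (union_subset (union_subset
      (hsub le_rfl (by norm_num) (by norm_num) le_rfl)
      (hsub (by norm_num) le_rfl (by norm_num) le_rfl))
      (hsub (by norm_num) le_rfl le_rfl (by norm_num))),
    setIntegral_indicator_of_subset (by measurability)
      (hsub (by norm_num) (by norm_num) (by norm_num) (by norm_num))]
  simp only [setIntegral_const, smul_eq_mul, mul_one]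
  rw [measureReal_Icc_prod_Icc (by norm_num) (by norm_num),
    measureReal_Icc_prod_Icc (by norm_num) (by norm_num), measureReal_corners]
  norm_num

/-- The base density is a probability density on [0,1]². -/
theorem baseDensity_isProbabilityDensity :
    (∀ z : ℝ × ℝ, 0 ≤ baseDensity z) ∧
      ∫ z in (Set.Icc (0:ℝ) 1 ×ˢ Set.Icc (0:ℝ) 1), baseDensity z = 1 := by
  refine ⟨baseDensity_nonneg, ?_⟩
  have := aNorm_pos
  rw [setIntegral_unitSquare_baseDensity]
  field_simp
  ring
end

section
/- Setting K = ⌊T^{1/4}⌋, γ = (ln T)^{1/3}/T^{1/4}, and η = (1/2)·(ln T)^{2/3}/T^{3/4}, for T large enough that γ ∈ (0,1), the bound (ln K)/η + (γ + ηK/γ + 1/(σK))·T is at most (2/σ + 3(ln T)^{1/3})·T^{3/4}. -/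
set_option maxHeartbeats 1000000 in
/-- Parameter tuning of Blind-Exp3: with K = ⌊T^{1/4}⌋, γ = (ln T)^{1/3}/T^{1/4},
η = (1/2)(ln T)^{2/3}/T^{3/4}, the regret bound is at most
(2/σ + 3(ln T)^{1/3})·T^{3/4}. -/
theorem blind_exp3_tuning
    (σ : ℝ) (hσ : σ ∈ Set.Ioc (0:ℝ) 1) (T : ℕ) (hT : 2 ≤ T)
    (K : ℕ) (hK : K = Nat.floor ((T : ℝ) ^ ((1:ℝ)/4)))
    (γ η : ℝ)
    (hγ : γ = (Real.log T) ^ ((1:ℝ)/3) / (T : ℝ) ^ ((1:ℝ)/4))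
    (hη : η = (1/2) * (Real.log T) ^ ((2:ℝ)/3) / (T : ℝ) ^ ((3:ℝ)/4))
    (hγ1 : γ < 1) :
    Real.log K / η + (γ + η * K / γ + 1 / (σ * K)) * T
      ≤ (2 / σ + 3 * (Real.log T) ^ ((1:ℝ)/3)) * (T : ℝ) ^ ((3:ℝ)/4) := by
  obtain ⟨hσ0, hσ1⟩ := hσ
  have hT1 : (1:ℝ) < (T:ℝ) := by exact_mod_cast lt_of_lt_of_le one_lt_two hT
  have hT0 : (0:ℝ) < (T:ℝ) := by linarith
  set L := Real.log T with hLdef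
  have hL : 0 < L := Real.log_pos hT1
  set l := L ^ ((1:ℝ)/3) with hldef
  set A := (T:ℝ) ^ ((1:ℝ)/4) with hAdef
  have hl : 0 < l := Real.rpow_pos_of_pos hL _
  have hA1 : 1 < A := Real.one_lt_rpow_iff_of_pos hT0 |>.2 (Or.inl ⟨hT1, by norm_num⟩)
  have hA0 : 0 < A := by linarith
  have hl3 : l ^ 3 = L := by
    rw [hldef, ← Real.rpow_natCast (L ^ ((1:ℝ)/3)) 3, ← Real.rpow_mul hL.le]
    norm_num
  have hl2 : l ^ 2 = L ^ ((2:ℝ)/3) := by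
    rw [hldef, ← Real.rpow_natCast (L ^ ((1:ℝ)/3)) 2, ← Real.rpow_mul hL.le]
    norm_num
  have hA3 : A ^ 3 = (T:ℝ) ^ ((3:ℝ)/4) := by
    rw [hAdef, ← Real.rpow_natCast ((T:ℝ) ^ ((1:ℝ)/4)) 3, ← Real.rpow_mul hT0.le]
    norm_num
  have hA4 : A ^ 4 = (T:ℝ) := by
    rw [hAdef, ← Real.rpow_natCast ((T:ℝ) ^ ((1:ℝ)/4)) 4, ← Real.rpow_mul hT0.le]
    norm_num
  have hlogA : Real.log A = (1/4) * L := by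
    rw [hAdef, Real.log_rpow hT0]
  clear_value L l A
  clear hLdef hldef hAdef
  have hK1 : 1 ≤ K := by
    rw [hK]
    exact Nat.le_floor (by exact_mod_cast hA1.le)
  have hK0 : (0:ℝ) < K := by exact_mod_cast hK1
  have hKA : (K:ℝ) ≤ A := hK ▸ Nat.floor_le hA0.le
  have hAK : A ≤ 2 * K := by
    have h1 : A < (Nat.floor A : ℝ) + 1 := Nat.lt_floor_add_one A
    rw [← hK] at h1
    have hK1' : (1:ℝ) ≤ K := by exact_mod_cast hK1
    linarith
  have hlogK0 : 0 ≤ Real.log K := Real.log_natCast_nonneg K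
  have hlogK : Real.log K ≤ l ^ 3 / 4 := by
    have h1 : Real.log K ≤ Real.log A := Real.log_le_log hK0 hKA
    rw [hl3]; linarith [hlogA]
  have key : Real.log K / η + (γ + η * K / γ + 1 / (σ * K)) * T
      = Real.log K * (2 * A ^ 3 / l ^ 2) + l * A ^ 3 + (1/2) * l * K * A ^ 2
        + A ^ 4 / (σ * K) := by
    rw [hη, hγ, ← hl2, ← hA3, ← hA4]
    field_simp
    ring
  have b1 : Real.log K * (2 * A ^ 3 / l ^ 2) ≤ l * A ^ 3 / 2 := by
    have h1 : Real.log K * (2 * A ^ 3 / l ^ 2) ≤ (l ^ 3 / 4) * (2 * A ^ 3 / l ^ 2) := by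
      apply mul_le_mul_of_nonneg_right hlogK
      positivity
    have h2 : (l ^ 3 / 4) * (2 * A ^ 3 / l ^ 2) = l * A ^ 3 / 2 := by
      field_simp
      ring
    linarith
  have b2 : (1/2) * l * K * A ^ 2 ≤ (1/2) * l * A ^ 3 := by
    nlinarith [mul_nonneg (mul_nonneg hl.le (sub_nonneg.2 hKA)) (sq_nonneg A)]
  have b3 : A ^ 4 / (σ * K) ≤ 2 * A ^ 3 / σ := by
    rw [div_le_div_iff₀ (by positivity) hσ0]
    nlinarith [mul_le_mul_of_nonneg_left hAK (le_of_lt (mul_pos hσ0 (pow_pos hA0 3)))]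
  rw [key, ← hA3]
  have hr : (2 / σ + 3 * l) * A ^ 3 = 2 * A ^ 3 / σ + 3 * l * A ^ 3 := by ring
  rw [hr]
  nlinarith [mul_pos hl (pow_pos hA0 3)]
end
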